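/- arXiv:2004.03295 — 7 statements merged into one kernel-verified Lean document; each statement's English description precedes it below -/
import Mathlib

section
/- Let F be a finite set, b a natural number with b ≥ 1, and P a partition of F into pairwise disjoint nonempty blocks with 1 ≤ |P| ≤ 2b. Then there exists B ⊆ F with |B| ≤ b such that the number of blocks of P intersecting B is at least |P|/2; hence P is not robust against an attacker modifying at most b features. -/
/-- If a partition `P` of a finite set `F` into pairwise disjoint nonempty blocks has
`1 ≤ |P| ≤ 2b` blocks (with `b ≥ 1`), then there exists an attack `B ⊆ F` with `|B| ≤ b`
that intersects at least `|P|/2` of the blocks; hence `P` is not robust. -/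
theorem stmt_3 {α : Type*} [DecidableEq α]
    (F : Finset α) (b : ℕ) (hb : 1 ≤ b) (P : Finset (Finset α))
    (hdisj : (P : Set (Finset α)).PairwiseDisjoint id)
    (hne : ∀ p ∈ P, p.Nonempty)
    (hcover : P.biUnion id = F)
    (hP1 : 1 ≤ P.card) (hP2 : P.card ≤ 2 * b) :
    ∃ B : Finset α, B ⊆ F ∧ B.card ≤ b ∧
      (P.card : ℚ) / 2 ≤ ((P.filter fun p => (p ∩ B).Nonempty).card : ℚ) := by
  classical
  set k := min b P.card with hk
  obtain ⟨Q, hQP, hQcard⟩ := Finset.exists_subset_card_eq (min_le_right b P.card)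
  set f : Finset α → Finset α := fun p => if h : p.Nonempty then {h.choose} else ∅ with hf
  refine ⟨Q.biUnion f, ?_, ?_, ?_⟩
  · intro x hx
    obtain ⟨p, hp, hxp⟩ := Finset.mem_biUnion.1 hx
    have hpne : p.Nonempty := hne p (hQP hp)
    rw [hf] at hxp
    simp only [dif_pos hpne, Finset.mem_singleton] at hxp
    subst hxp
    rw [← hcover]
    exact Finset.mem_biUnion.2 ⟨p, hQP hp, hpne.choose_spec⟩
  · calc (Q.biUnion f).card ≤ ∑ p ∈ Q, (f p).card := Finset.card_biUnion_le
      _ ≤ ∑ p ∈ Q, 1 := by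
          refine Finset.sum_le_sum fun p _ => ?_
          by_cases h : p.Nonempty <;> simp [hf, h]
      _ = k := by rw [Finset.sum_const, smul_eq_mul, mul_one, hQcard]
      _ ≤ b := min_le_left _ _
  · have hsub : Q ⊆ P.filter fun p => (p ∩ Q.biUnion f).Nonempty := by
      intro p hp
      have hpne : p.Nonempty := hne p (hQP hp)
      refine Finset.mem_filter.2 ⟨hQP hp, ⟨hpne.choose, Finset.mem_inter.2 ⟨hpne.choose_spec, ?_⟩⟩⟩
      refine Finset.mem_biUnion.2 ⟨p, hp, ?_⟩
      rw [hf]; simp [dif_pos hpne]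
    have hcard : k ≤ (P.filter fun p => (p ∩ Q.biUnion f).Nonempty).card := by
      rw [hk, ← hQcard]; exact Finset.card_le_card hsub
    have hk2 : (P.card : ℚ) / 2 ≤ (k : ℚ) := by
      rcases le_total P.card b with h | h
      · rw [hk, min_eq_right h]
        have : (0:ℚ) ≤ P.card := by positivity
        linarith
      · rw [hk, min_eq_left h]
        have : (P.card : ℚ) ≤ 2 * b := by exact_mod_cast hP2
        linarith
    calc (P.card : ℚ) / 2 ≤ (k : ℚ) := hk2
      _ ≤ _ := by exact_mod_cast hcard
end

section
/- Let d, b be natural numbers, let P₀, …, P_{2b} ⊆ Fin d be pairwise disjoint sets of features, and for each i ∈ Fin (2b+1) let tᵢ : (Fin d → ℝ) → ℤ be a function that depends only on the coordinates in Pᵢ (i.e., tᵢ x = tᵢ x' whenever x and x' agree on every coordinate in Pᵢ). Then for every x : Fin d → ℝ and every x' : Fin d → ℝ with |{j : x j ≠ x' j}| ≤ b, the number of indices i with tᵢ x = tᵢ x' is strictly greater than (2b+1)/2. -/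
/-- If the `2b+1` trees of a forest are trained on pairwise disjoint feature sets
`P i`, then for any instance `x` and any perturbation `x'` modifying at most `b`
coordinates, the number of trees with `t i x = t i x'` is strictly greater than
`(2b+1)/2`, i.e. a majority of the trees is unaffected. -/
theorem stmt_4 (d b : ℕ)
    (P : Fin (2 * b + 1) → Set (Fin d))
    (hdisj : ∀ i j, i ≠ j → Disjoint (P i) (P j))
    (t : Fin (2 * b + 1) → (Fin d → ℝ) → ℤ)
    (hdep : ∀ i (x x' : Fin d → ℝ), (∀ j ∈ P i, x j = x' j) → t i x = t i x')
    (x x' : Fin d → ℝ)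
    (hatk : ({j | x j ≠ x' j} : Set (Fin d)).ncard ≤ b) :
    ((2 * b + 1 : ℚ)) / 2 <
      (({i | t i x = t i x'} : Set (Fin (2 * b + 1))).ncard : ℚ) := by
  set S : Set (Fin (2 * b + 1)) := {i | t i x = t i x'} with hS
  set D : Set (Fin d) := {j | x j ≠ x' j} with hD
  have hwit : ∀ i ∈ Sᶜ, ∃ j ∈ P i, j ∈ D := by
    intro i hi
    by_contra h
    push_neg at h
    exact hi (hdep i x x' (fun j hj => by
      have := h j hj
      simpa [hD, not_not] using this))
  choose f hfP hfD using hwit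
  have key : Sᶜ.ncard ≤ b := by
    rcases Sᶜ.eq_empty_or_nonempty with h | ⟨i0, hi0⟩
    · simp [h]
    · set g : Fin (2 * b + 1) → Fin d :=
        fun i => if h : i ∈ Sᶜ then f i h else f i0 hi0 with hg
      have hmaps : ∀ i ∈ Sᶜ, g i ∈ D := by
        intro i hi; simp only [hg, dif_pos hi]; exact hfD i hi
      have hinj : Set.InjOn g Sᶜ := by
        intro i hi j hj hij
        by_contra hne
        simp only [hg, dif_pos hi, dif_pos hj] at hij
        have h1 : f i hi ∈ P i := hfP i hi
        have h2 : f i hi ∈ P j := hij ▸ hfP j hj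
        exact (Set.disjoint_left.mp (hdisj i j hne) h1) h2
      exact (Set.ncard_le_ncard_of_injOn g hmaps hinj (Set.toFinite D)).trans hatk
  have hsum : S.ncard + Sᶜ.ncard = 2 * b + 1 := by
    rw [Set.ncard_add_ncard_compl]
    simp
  have hlow : b + 1 ≤ S.ncard := by omega
  have : (b + 1 : ℚ) ≤ (S.ncard : ℚ) := by exact_mod_cast hlow
  push_cast
  linarith
end

section
/- Let d, b, r be natural numbers with r ≥ 1. For each i ∈ Fin r let P_{i,0}, …, P_{i,2b} ⊆ Fin d be pairwise disjoint sets of features, and let t_{i,j} : (Fin d → ℝ) → ℤ depend only on the coordinates in P_{i,j}. Then for every x : Fin d → ℝ and every x' with |{k : x k ≠ x' k}| ≤ b, the number of pairs (i,j) with t_{i,j} x = t_{i,j} x' is at least r·(b+1), which is strictly greater than half of the total number r·(2b+1) of trees. -/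
/-- FPF with `r ≥ 1` rounds: in each round `i` the `2b+1` trees are trained on
pairwise disjoint feature sets `P i j`. For any instance `x` and any perturbation `x'`
modifying at most `b` coordinates, at least `r·(b+1)` of the `r·(2b+1)` trees are
unaffected, which is strictly more than half of the trees. -/
theorem stmt_5 (d b r : ℕ) (hr : 1 ≤ r)
    (P : Fin r → Fin (2 * b + 1) → Set (Fin d))
    (hdisj : ∀ i, ∀ j k, j ≠ k → Disjoint (P i j) (P i k))
    (t : Fin r → Fin (2 * b + 1) → (Fin d → ℝ) → ℤ)
    (hdep : ∀ i j (x x' : Fin d → ℝ),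
      (∀ k ∈ P i j, x k = x' k) → t i j x = t i j x')
    (x x' : Fin d → ℝ)
    (hatk : ({k | x k ≠ x' k} : Set (Fin d)).ncard ≤ b) :
    r * (b + 1) ≤
      ({p : Fin r × Fin (2 * b + 1) | t p.1 p.2 x = t p.1 p.2 x'}).ncard ∧
    ((r * (2 * b + 1) : ℚ)) / 2 < ((r * (b + 1) : ℚ)) := by
  classical
  constructor
  · set S : Finset (Fin d) := Finset.univ.filter (fun k => x k ≠ x' k) with hS
    have hScard : S.card ≤ b := by
      have : ({k | x k ≠ x' k} : Set (Fin d)).ncard = S.card := by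
        rw [Set.ncard_eq_toFinset_card']
        congr 1
        ext k
        simp [hS]
      omega
    set G : Finset (Fin r × Fin (2 * b + 1)) :=
      Finset.univ.filter (fun p => t p.1 p.2 x = t p.1 p.2 x') with hG
    set B : Finset (Fin r × Fin (2 * b + 1)) :=
      Finset.univ.filter (fun p => ¬ t p.1 p.2 x = t p.1 p.2 x') with hB
    have hsum : G.card + B.card = r * (2 * b + 1) := by
      rw [hG, hB, Finset.card_filter_add_card_filter_not]
      simp [Finset.card_univ]
    have hGn : ({p : Fin r × Fin (2 * b + 1) | t p.1 p.2 x = t p.1 p.2 x'}).ncard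
        = G.card := by
      rw [Set.ncard_eq_toFinset_card']
      congr 1
      ext p
      simp [hG]
    have hwit : ∀ p ∈ B, ∃ k ∈ P p.1 p.2, x k ≠ x' k := by
      intro p hp
      rw [hB, Finset.mem_filter] at hp
      by_contra h
      push_neg at h
      exact hp.2 (hdep p.1 p.2 x x' fun k hk => h k hk)
    have hBcard : B.card ≤ r * b := by
      rcases Nat.eq_zero_or_pos d with hd | hd
      · have hB0 : B = ∅ := by
          apply Finset.eq_empty_of_forall_notMem
          intro p hp
          obtain ⟨k, _, _⟩ := hwit p hp
          exact absurd (k.2) (by omega)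
        simp [hB0]
      · haveI : Nonempty (Fin d) := ⟨⟨0, hd⟩⟩
        set f : Fin r × Fin (2 * b + 1) → Fin r × Fin d :=
          fun p => (p.1, if h : ∃ k ∈ P p.1 p.2, x k ≠ x' k
              then h.choose else Classical.arbitrary (Fin d)) with hf
        have key : B.card ≤ ((Finset.univ : Finset (Fin r)) ×ˢ S).card := by
          apply Finset.card_le_card_of_injOn f
          · intro p hp
            obtain h := hwit p hp
            simp only [hf, dif_pos h]
            obtain ⟨hk1, hk2⟩ := h.choose_spec
            simp [hS, Finset.mem_product, hk2]
          · rintro ⟨i, j⟩ hp ⟨i', j'⟩ hq heq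
            have h1 := hwit (i, j) hp
            have h2 := hwit (i', j') hq
            simp only [hf, dif_pos h1, dif_pos h2, Prod.mk.injEq] at heq
            obtain ⟨heq1, heq2⟩ := heq
            subst heq1
            have hp2 : j = j' := by
              by_contra hne
              have m1 : h1.choose ∈ P i j := h1.choose_spec.1
              have m2 : h1.choose ∈ P i j' := heq2 ▸ h2.choose_spec.1
              exact (Set.disjoint_left.mp (hdisj i j j' hne) m1) m2
            simp [hp2]
        have : ((Finset.univ : Finset (Fin r)) ×ˢ S).card = r * S.card := by
          rw [Finset.card_product, Finset.card_univ, Fintype.card_fin]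
        have : ((Finset.univ : Finset (Fin r)) ×ˢ S).card ≤ r * b := by
          rw [this]
          exact Nat.mul_le_mul_left r hScard
        omega
    rw [hGn]
    have : r * (2 * b + 1) = r * (b + 1) + r * b := by ring
    omega
  · rw [div_lt_iff₀ (by norm_num)]
    have : (1:ℚ) ≤ r := by exact_mod_cast hr
    nlinarith
end

section
/- Let d, b be natural numbers, let P₀, …, P_{2b} ⊆ Fin d be pairwise disjoint, for each i let tᵢ : (Fin d → ℝ) → ℤ depend only on the coordinates in Pᵢ and take values in {−1, +1}, and let y ∈ {−1, +1}. Fix x : Fin d → ℝ with tᵢ x = y for all i. Then for every x' with |{j : x j ≠ x' j}| ≤ b, the sign of ∑ᵢ tᵢ x' equals y; in particular ∑ᵢ tᵢ x' ≠ 0 and y · (∑ᵢ tᵢ x') > 0. -/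
/-!
A tree that is wrong on `x'` must see a perturbed coordinate in its own feature set; since the
feature sets are disjoint, the `b` perturbed coordinates can make at most `b` of the `2b + 1`
trees wrong, so the correct votes keep a strict majority.
-/

open Finset Function

theorem ncard_setOf_ne_le_of_pairwise_disjoint {ι α β γ : Type*} [Finite ι] [Finite α]
    (P : ι → Set α) (hP : Pairwise (Disjoint on P)) (f : ι → (α → β) → γ)
    (hf : ∀ i x x', (∀ j ∈ P i, x j = x' j) → f i x = f i x') (x x' : α → β) :
    {i | f i x ≠ f i x'}.ncard ≤ {j | x j ≠ x' j}.ncard := by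
  classical
  have := Fintype.ofFinite ι
  have := Fintype.ofFinite α
  simp only [Set.ncard_eq_toFinset_card', Set.toFinset_ofPred]
  refine card_le_card_of_forall_subsingleton (fun i j ↦ j ∈ P i) (fun i hi ↦ ?_) ?_
  · obtain ⟨j, hjP, hj⟩ : ∃ j ∈ P i, x j ≠ x' j := by
      by_contra! h
      exact (mem_filter.1 hi).2 (hf i x x' h)
    exact ⟨j, by simpa using hj, hjP⟩
  · intro j _ i₁ hi₁ i₂ hi₂
    by_contra hne
    exact Set.disjoint_left.1 (hP hne) hi₁.2 hi₂.2

theorem mul_sum_eq_card_sub_two_mul_card_ne {ι : Type*} [Fintype ι] (g : ι → ℤ)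
    (hg : ∀ i, g i = -1 ∨ g i = 1) (y : ℤ) (hy : y = -1 ∨ y = 1) :
    y * ∑ i, g i = Fintype.card ι - 2 * #{i | g i ≠ y} := by
  have h : ∀ i, y * g i = 1 - 2 * if g i ≠ y then 1 else 0 := by
    intro i; rcases hg i with h | h <;> rcases hy with rfl | rfl <;> simp [h]
  rw [mul_sum]
  simp only [h, sum_sub_distrib, ← mul_sum, sum_boole]
  simp

theorem sign_eq_of_pos_mul {y s : ℤ} (hy : y = -1 ∨ y = 1) (h : 0 < y * s) : s.sign = y := by
  rcases hy with rfl | rfl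
  · exact Int.sign_eq_neg_one_of_neg (by omega)
  · exact Int.sign_eq_one_of_pos (by omega)

/-- A forest of `2b+1` binary (`±1`-valued) trees trained on pairwise disjoint feature
sets, all of which are correct (equal to `y`) on an instance `x`: for any perturbation
`x'` modifying at most `b` coordinates, the sign of the sum of the tree predictions on
`x'` still equals `y`; in particular the sum is nonzero and `y · (∑ᵢ tᵢ x') > 0`. -/
theorem stmt_7 (d b : ℕ)
    (P : Fin (2 * b + 1) → Set (Fin d))
    (hdisj : ∀ i j, i ≠ j → Disjoint (P i) (P j))
    (t : Fin (2 * b + 1) → (Fin d → ℝ) → ℤ)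
    (hdep : ∀ i (x x' : Fin d → ℝ), (∀ j ∈ P i, x j = x' j) → t i x = t i x')
    (hval : ∀ i (x : Fin d → ℝ), t i x = -1 ∨ t i x = 1)
    (y : ℤ) (hy : y = -1 ∨ y = 1)
    (x : Fin d → ℝ) (hx : ∀ i, t i x = y)
    (x' : Fin d → ℝ)
    (hatk : ({j | x j ≠ x' j} : Set (Fin d)).ncard ≤ b) :
    Int.sign (∑ i, t i x') = y ∧ (∑ i, t i x') ≠ 0 ∧ 0 < y * ∑ i, t i x' := by
  have hwrong : #{i | t i x' ≠ y} ≤ b :=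
    calc #{i | t i x' ≠ y} = {i | t i x ≠ t i x'}.ncard := by
          simp only [hx, ne_comm (a := y), Set.ncard_eq_toFinset_card', Set.toFinset_ofPred]
      _ ≤ {j | x j ≠ x' j}.ncard := ncard_setOf_ne_le_of_pairwise_disjoint P hdisj t hdep x x'
      _ ≤ b := hatk
  have hpos : 0 < y * ∑ i, t i x' := by
    rw [mul_sum_eq_card_sub_two_mul_card_ne _ (hval · x') y hy, Fintype.card_fin]
    omega
  exact ⟨sign_eq_of_pos_mul hy hpos, fun h ↦ by simp [h] at hpos, hpos⟩
end

section
/- Let d, b, r be natural numbers with r ≥ 1. For each i ∈ Fin r let P_{i,0}, …, P_{i,2b} ⊆ Fin d be pairwise disjoint, and let t_{i,j} : (Fin d → ℝ) → ℤ depend only on the coordinates in P_{i,j} and take values in {−1, +1}. Let y ∈ {−1, +1} and fix x with t_{i,j} x = y for all (i,j). Then for every x' with |{k : x k ≠ x' k}| ≤ b, we have y · (∑_{i,j} t_{i,j} x') > 0; i.e., the sign-of-sum prediction of the FPF forest on the attacked instance x' still equals y. -/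
/-- FPF forest with `r ≥ 1` rounds of `2b+1` binary (`±1`-valued) trees, each round
trained on pairwise disjoint feature sets, all trees correct (equal to `y`) on `x`:
for any perturbation `x'` modifying at most `b` coordinates, the sign-of-sum prediction
of the forest on `x'` still equals `y`, i.e. `y · (∑ t_{i,j} x') > 0`. -/
theorem stmt_8 (d b r : ℕ) (hr : 1 ≤ r)
    (P : Fin r → Fin (2 * b + 1) → Set (Fin d))
    (hdisj : ∀ i, ∀ j k, j ≠ k → Disjoint (P i j) (P i k))
    (t : Fin r → Fin (2 * b + 1) → (Fin d → ℝ) → ℤ)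
    (hdep : ∀ i j (x x' : Fin d → ℝ),
      (∀ k ∈ P i j, x k = x' k) → t i j x = t i j x')
    (hval : ∀ i j (x : Fin d → ℝ), t i j x = -1 ∨ t i j x = 1)
    (y : ℤ) (hy : y = -1 ∨ y = 1)
    (x : Fin d → ℝ) (hx : ∀ i j, t i j x = y)
    (x' : Fin d → ℝ)
    (hatk : ({k | x k ≠ x' k} : Set (Fin d)).ncard ≤ b) :
    0 < y * ∑ i, ∑ j, t i j x' := by
  classical
  have hy2 : y * y = 1 := by rcases hy with h | h <;> simp [h]
  -- the set of attacked coordinates as a finset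
  set Sfin : Finset (Fin d) := Finset.univ.filter (fun k => x k ≠ x' k) with hSfin
  have hScard : Sfin.card ≤ b := by
    have hcoe : (↑Sfin : Set (Fin d)) = {k | x k ≠ x' k} := by
      ext k; simp [hSfin]
    have h2 := Set.ncard_coe_finset Sfin
    rw [hcoe] at h2
    omega
  have key : ∀ i, 1 ≤ y * ∑ j, t i j x' := by
    intro i
    set bad : Finset (Fin (2 * b + 1)) :=
      Finset.univ.filter (fun j => t i j x' ≠ y) with hbad
    have hwit : ∀ j ∈ bad, ∃ k, k ∈ P i j ∧ x k ≠ x' k := by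
      intro j hj
      by_contra h
      push_neg at h
      have heq : t i j x = t i j x' := hdep i j x x' (fun k hk => h k hk)
      have : t i j x' = y := heq ▸ hx i j
      simp [hbad] at hj
      exact hj this
    have hbcard : bad.card ≤ b := by
      rcases bad.eq_empty_or_nonempty with he | ⟨j0, hj0⟩
      · simp [he]
      · obtain ⟨k0, -, -⟩ := hwit j0 hj0
        set f : Fin (2 * b + 1) → Fin d :=
          fun j => if h : j ∈ bad then (hwit j h).choose else k0 with hf
        have hfmem : ∀ j (h : j ∈ bad), f j ∈ P i j ∧ x (f j) ≠ x' (f j) := by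
          intro j h
          simp only [hf, dif_pos h]
          exact (hwit j h).choose_spec
        have hle : bad.card ≤ Sfin.card := by
          apply Finset.card_le_card_of_injOn f
          · intro j hj
            simp [hSfin, (hfmem j hj).2]
          · intro j1 h1 j2 h2 hfe
            by_contra hne
            have hd := hdisj i j1 j2 hne
            exact (hd.ne_of_mem (hfmem j1 h1).1 (hfe ▸ (hfmem j2 h2).1)) rfl
        omega
    -- lower bound each tree by ±1 indicator
    have hterm : ∀ j, (if t i j x' = y then (1 : ℤ) else -1) ≤ y * t i j x' := by
      intro j
      split
      · next h => rw [h, hy2]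
      · rcases hval i j x' with h | h <;> rcases hy with h' | h' <;> simp [h, h']
    calc (1 : ℤ) ≤ ∑ j, (if t i j x' = y then (1 : ℤ) else -1) := by
          rw [Finset.sum_ite]
          simp only [Finset.sum_const, nsmul_eq_mul, mul_one, mul_neg]
          have hsplit := Finset.card_filter_add_card_filter_not
            (s := (Finset.univ : Finset (Fin (2 * b + 1)))) (p := fun j => t i j x' = y)
          have huniv : (Finset.univ : Finset (Fin (2 * b + 1))).card = 2 * b + 1 := by simp
          have hbadeq : (Finset.univ.filter (fun j => ¬ t i j x' = y)).card = bad.card := by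
            simp [hbad]
          rw [hbadeq] at hsplit
          have : (Finset.univ.filter (fun j => t i j x' = y)).card = 2 * b + 1 - bad.card := by
            omega
          rw [this]
          push_cast [Nat.cast_sub (by omega : bad.card ≤ 2 * b + 1)]
          have : (bad.card : ℤ) ≤ b := by exact_mod_cast hbcard
          linarith
      _ ≤ ∑ j, y * t i j x' := Finset.sum_le_sum (fun j _ => hterm j)
      _ = y * ∑ j, t i j x' := (Finset.mul_sum _ _ _).symm
  rw [Finset.mul_sum]
  have : Nonempty (Fin r) := ⟨⟨0, hr⟩⟩
  exact Finset.sum_pos (fun i _ => lt_of_lt_of_le zero_lt_one (key i))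
    Finset.univ_nonempty
end

section
/- Let d, b, n be natural numbers, let t₀, …, t_{n−1} : (Fin d → ℝ) → ℤ take values in {−1, +1}, and suppose each tᵢ depends only on the coordinates in a set Qᵢ ⊆ Fin d. Let y ∈ {−1, +1}, fix x : Fin d → ℝ, and let W = {i : tᵢ x ≠ y}. Assume that for every B ⊆ Fin d with |B| ≤ b, |W| + |{i ∉ W : Qᵢ ∩ B ≠ ∅}| < n/2. Then for every x' with |{k : x k ≠ x' k}| ≤ b, we have y · (∑ᵢ tᵢ x') > 0. -/
/-- Set-cover certification: a forest of `n` binary (`±1`-valued) trees, where tree `i`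
depends only on features `Q i`. Let `W` be the set of trees already wrong on `x`
(w.r.t. the true label `y`). If for every attacked feature set `B` with `|B| ≤ b` the
wrong trees plus the correct trees whose feature set meets `B` are strictly fewer than
`n/2`, then no perturbation of at most `b` coordinates can flip the forest prediction:
`y · (∑ᵢ tᵢ x') > 0`. -/
theorem stmt_9 (d b n : ℕ)
    (t : Fin n → (Fin d → ℝ) → ℤ)
    (Q : Fin n → Set (Fin d))
    (hval : ∀ i (x : Fin d → ℝ), t i x = -1 ∨ t i x = 1)
    (hdep : ∀ i (x x' : Fin d → ℝ), (∀ k ∈ Q i, x k = x' k) → t i x = t i x')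
    (y : ℤ) (hy : y = -1 ∨ y = 1)
    (x : Fin d → ℝ)
    (W : Set (Fin n)) (hW : W = {i | t i x ≠ y})
    (hcert : ∀ B : Set (Fin d), B.ncard ≤ b →
      ((W.ncard : ℚ) + (({i | i ∉ W ∧ (Q i ∩ B).Nonempty} : Set (Fin n)).ncard : ℚ))
        < (n : ℚ) / 2)
    (x' : Fin d → ℝ)
    (hatk : ({k | x k ≠ x' k} : Set (Fin d)).ncard ≤ b) :
    0 < y * ∑ i, t i x' := by
  classical
  set B : Set (Fin d) := {k | x k ≠ x' k} with hB
  set S : Finset (Fin n) := Finset.univ.filter (fun i => t i x' ≠ y) with hS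
  -- every wrong-on-x' tree is either wrong on x, or its features meet B
  have hsub : (S : Set (Fin n)) ⊆ W ∪ {i | i ∉ W ∧ (Q i ∩ B).Nonempty} := by
    intro i hi
    simp only [hS, Finset.coe_filter, Set.mem_setOf_eq, Finset.mem_univ, true_and] at hi
    by_cases hiW : i ∈ W
    · exact Or.inl hiW
    · refine Or.inr ⟨hiW, ?_⟩
      by_contra hemp
      rw [Set.not_nonempty_iff_eq_empty] at hemp
      have heq : t i x = t i x' := by
        refine hdep i x x' (fun k hk => ?_)
        by_contra hne
        have : k ∈ Q i ∩ B := ⟨hk, hne⟩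
        rw [hemp] at this
        exact this
      have hiW' : t i x = y := by
        rw [hW] at hiW
        simpa using hiW
      exact hi (heq ▸ hiW')
  have hScard : (S.card : ℚ) < (n : ℚ) / 2 := by
    have h1 : (S : Set (Fin n)).ncard ≤
        W.ncard + ({i | i ∉ W ∧ (Q i ∩ B).Nonempty} : Set (Fin n)).ncard := by
      calc (S : Set (Fin n)).ncard
          ≤ (W ∪ {i | i ∉ W ∧ (Q i ∩ B).Nonempty}).ncard :=
            Set.ncard_le_ncard hsub (Set.toFinite _)
        _ ≤ _ := Set.ncard_union_le _ _
    have h2 := hcert B hatk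
    have h3 : (S.card : ℚ) ≤ (W.ncard : ℚ) +
        (({i | i ∉ W ∧ (Q i ∩ B).Nonempty} : Set (Fin n)).ncard : ℚ) := by
      rw [← Set.ncard_coe_finset]
      exact_mod_cast h1
    linarith
  have hcard : 2 * S.card < n := by
    have : (2 * S.card : ℚ) < n := by linarith
    exact_mod_cast this
  have hy2 : y * y = 1 := by rcases hy with h | h <;> simp [h]
  have hterm : ∀ i, y * t i x' = if i ∈ S then (-1 : ℤ) else 1 := by
    intro i
    by_cases hi : i ∈ S
    · rw [if_pos hi]
      have hne : t i x' ≠ y := by simpa [hS] using hi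
      have ht : t i x' = -y := by
        rcases hval i x' with h | h <;> rcases hy with h' | h' <;> simp_all
      rw [ht, mul_neg, hy2]
    · rw [if_neg hi]
      have heq : t i x' = y := by simpa [hS] using hi
      rw [heq, hy2]
  have hle : S.card ≤ n := by
    simpa using Finset.card_le_card (Finset.subset_univ S)
  have hsum : y * ∑ i, t i x' = (n : ℤ) - 2 * S.card := by
    rw [Finset.mul_sum]
    rw [Finset.sum_congr rfl (fun i _ => hterm i)]
    rw [Finset.sum_ite, Finset.sum_const, Finset.sum_const,
      Finset.filter_mem_eq_inter, Finset.univ_inter]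
    have hc : (Finset.univ.filter (fun i => i ∉ S)).card = n - S.card := by
      rw [Finset.filter_not, Finset.filter_mem_eq_inter, Finset.univ_inter,
        Finset.card_sdiff_of_subset (Finset.subset_univ _)]
      simp
    rw [hc]
    simp only [nsmul_eq_mul, smul_eq_mul]
    push_cast [Nat.cast_sub hle]
    ring
  rw [hsum]
  omega
end

section
/- Define binary decision trees over ℝ^d inductively with evaluation as usual (at node (f, v, t_l, t_r), recurse left if x f ≤ v, right otherwise). Let T be a finite set of such trees, and for each feature f let V_f be the (finite) set of thresholds v appearing in nodes (f, v, ·, ·) of trees in T. Fix x : Fin d → ℝ, a natural number b, and any x' with |{f : x f ≠ x' f}| ≤ b. Then there exists x'' : Fin d → ℝ such that (i) x'' differs from x only on coordinates where x' differs from x (so |{f : x f ≠ x'' f}| ≤ b), (ii) for each f with x'' f ≠ x f, either x'' f ∈ V_f or x'' f is strictly greater than every element of V_f, and (iii) eval t x'' = eval t x' for every t ∈ T. -/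
/-- Binary decision trees over `ℝ^d`. -/
inductive DTree (d : ℕ) : Type
  | leaf (label : ℤ) : DTree d
  | node (f : Fin d) (v : ℝ) (l r : DTree d) : DTree d

noncomputable instance {d : ℕ} : DecidableEq (DTree d) := Classical.decEq _

/-- Evaluation: at a node `(f, v, t_l, t_r)` recurse on `t_l` if `x f ≤ v`,
on `t_r` otherwise; a leaf returns its label. -/
noncomputable def DTree.eval {d : ℕ} : DTree d → (Fin d → ℝ) → ℤ
  | .leaf y, _ => y
  | .node f v l r, x => if x f ≤ v then l.eval x else r.eval x

/-- The set of tests `(f, v)` occurring at the internal nodes of a tree. -/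
def DTree.tests {d : ℕ} : DTree d → Set (Fin d × ℝ)
  | .leaf _ => ∅
  | .node f v l r => insert (f, v) (l.tests ∪ r.tests)

lemma DTree.tests_finite {d : ℕ} (t : DTree d) : t.tests.Finite := by
  induction t with
  | leaf y => simp [DTree.tests]
  | node f v l r hl hr =>
    simpa [DTree.tests] using (hl.union hr).insert (f, v)

lemma DTree.eval_congr {d : ℕ} (t : DTree d) (a b : Fin d → ℝ)
    (h : ∀ p ∈ t.tests, (a p.1 ≤ p.2 ↔ b p.1 ≤ p.2)) : t.eval a = t.eval b := by
  induction t with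
  | leaf y => rfl
  | node f v l r hl hr =>
    have hfv := h (f, v) (by simp [DTree.tests])
    simp only at hfv
    have hl' := hl fun p hp => h p (by simp [DTree.tests, hp])
    have hr' := hr fun p hp => h p (by simp [DTree.tests, hp])
    simp only [DTree.eval]
    by_cases hc : a f ≤ v
    · rw [if_pos hc, if_pos (hfv.mp hc), hl']
    · rw [if_neg hc, if_neg (fun hb => hc (hfv.mpr hb)), hr']

/-- Brute-force evaluation is complete: any attack `x'` on `x` modifying at most `b`
coordinates can be mimicked by a perturbation `x''` that (i) differs from `x` only
where `x'` does (hence on at most `b` coordinates), (ii) on each perturbed coordinate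
`f` takes a value in the set `V f` of relevant thresholds of feature `f` in the forest
`T`, or a value strictly greater than every relevant threshold, and (iii) produces the
same prediction as `x'` on every tree of `T`. -/
theorem stmt_13 {d : ℕ} (T : Finset (DTree d))
    (V : Fin d → Set ℝ)
    (hV : ∀ f, V f = {v | ∃ t ∈ T, (f, v) ∈ t.tests})
    (x : Fin d → ℝ) (b : ℕ)
    (x' : Fin d → ℝ)
    (hatk : ({f | x f ≠ x' f} : Set (Fin d)).ncard ≤ b) :
    ∃ x'' : Fin d → ℝ,
      (∀ f, x'' f ≠ x f → x' f ≠ x f) ∧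
      ({f | x f ≠ x'' f} : Set (Fin d)).ncard ≤ b ∧
      (∀ f, x'' f ≠ x f → (x'' f ∈ V f ∨ ∀ v ∈ V f, v < x'' f)) ∧
      (∀ t ∈ T, t.eval x'' = t.eval x') := by
  classical
  have hVfin : ∀ f, (V f).Finite := by
    intro f
    rw [hV]
    have : {v | ∃ t ∈ T, (f, v) ∈ t.tests} ⊆ Prod.snd '' (⋃ t ∈ T, DTree.tests t) := by
      rintro v ⟨t, ht, hv⟩
      exact ⟨(f, v), Set.mem_biUnion ht hv, rfl⟩
    exact ((Set.Finite.biUnion T.finite_toSet fun t _ => t.tests_finite).image _).subset this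
  set S : Fin d → Set ℝ := fun f => {v ∈ V f | x' f ≤ v} with hS
  have hSfin : ∀ f, (S f).Finite := fun f => (hVfin f).subset (Set.sep_subset _ _)
  set x'' : Fin d → ℝ := fun f =>
    if x' f = x f then x f else if (S f).Nonempty then sInf (S f) else x' f with hx''
  have hiff : ∀ f, ∀ v ∈ V f, (x'' f ≤ v ↔ x' f ≤ v) := by
    intro f v hv
    by_cases h1 : x' f = x f
    · simp [hx'', h1]
    by_cases h2 : (S f).Nonempty
    · have hbdd : BddBelow (S f) := (hSfin f).bddBelow
      have hmem : sInf (S f) ∈ S f := h2.csInf_mem (hSfin f)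
      have hx''v : x'' f = sInf (S f) := by simp [hx'', h1, h2]
      rw [hx''v]
      constructor
      · intro hle
        exact le_trans hmem.2 hle
      · intro hle
        exact csInf_le hbdd ⟨hv, hle⟩
    · simp only [hx'', if_neg h1, if_neg h2]
  refine ⟨x'', ?_, ?_, ?_, ?_⟩
  · intro f hf h1
    apply hf
    simp [hx'', h1]
  · refine le_trans (Set.ncard_le_ncard ?_ (Set.toFinite _)) hatk
    intro f hf
    simp only [Set.mem_setOf_eq] at hf ⊢
    intro h1
    apply hf
    simp [hx'', h1.symm]
  · intro f hf
    by_cases h1 : x' f = x f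
    · exact absurd (by simp [hx'', h1]) hf
    by_cases h2 : (S f).Nonempty
    · left
      have : x'' f = sInf (S f) := by simp [hx'', h1, h2]
      rw [this]
      exact (h2.csInf_mem (hSfin f)).1
    · right
      intro v hv
      have hx''v : x'' f = x' f := by simp [hx'', h1, h2]
      rw [hx''v]
      by_contra hle
      exact h2 ⟨v, hv, not_lt.mp hle⟩
  · intro t ht
    apply t.eval_congr
    rintro ⟨f, v⟩ hp
    exact hiff f v (by rw [hV]; exact ⟨t, ht, hp⟩)
end
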